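/- arXiv:1506.00158 — 6 statements merged into one kernel-verified Lean document; each statement's English description precedes it below -/
import Mathlib

section
/- Let κ be a regular uncountable cardinal and let P be a poset with |P| ≥ κ. If P is κ stationarily layered, then P is κ-Knaster, i.e. for every set X ⊆ P with |X| = κ there is Y ⊆ X with |Y| = κ whose elements are pairwise compatible in P. -/
/-!
STATEMENT 0: If a poset `P` with `|P| ≥ κ` (κ regular uncountable) is
κ stationarily layered, then `P` is κ-Knaster.
-/

open Cardinal

universe u

namespace Stmt0

variable {P : Type u}

/-- Two conditions are compatible within `S`: they have a common lower bound lying in `S`. -/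
def CompatIn [PartialOrder P] (S : Set P) (p q : P) : Prop :=
  ∃ r ∈ S, r ≤ p ∧ r ≤ q

/-- `X` (with the order inherited from `P`) is a suborder of `P`: any two elements of `X`
that are incompatible in `X` are incompatible in `P`; equivalently, any two elements of `X`
compatible in `P` are compatible in `X`. -/
def IsSuborder [PartialOrder P] (X : Set P) : Prop :=
  ∀ p ∈ X, ∀ q ∈ X, CompatIn (Set.univ : Set P) p q → CompatIn X p q

/-- `A` is an antichain of the suborder `S`. -/
def IsAntichainIn [PartialOrder P] (S A : Set P) : Prop :=
  A ⊆ S ∧ ∀ p ∈ A, ∀ q ∈ A, p ≠ q → ¬ CompatIn S p q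

/-- `A` is a maximal antichain of the suborder `S`. -/
def IsMaxAntichainIn [PartialOrder P] (S A : Set P) : Prop :=
  IsAntichainIn S A ∧ ∀ p ∈ S, ∃ a ∈ A, CompatIn S p a

/-- `X` is a regular suborder of `P`: a suborder all of whose maximal antichains are
maximal antichains of `P`. -/
def IsRegularSuborder [PartialOrder P] (X : Set P) : Prop :=
  IsSuborder X ∧ ∀ A : Set P, IsMaxAntichainIn X A → IsMaxAntichainIn (Set.univ : Set P) A

/-- `C` is club in `P_κ(H)`: a collection of subsets of `H` of size `< κ` which is
cofinal in `(P_κ(H), ⊆)` and closed under unions of ⊆-increasing chains of length `< κ`. -/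
def IsClubIn (κ : Cardinal.{u}) {H : Type u} (C : Set (Set H)) : Prop :=
  (∀ x ∈ C, #x < κ) ∧
  (∀ x : Set H, #x < κ → ∃ y ∈ C, x ⊆ y) ∧
  (∀ D : Set (Set H), D ⊆ C → D.Nonempty → IsChain (· ⊆ ·) D → #D < κ → ⋃₀ D ∈ C)

/-- `S` is (strongly) stationary in `P_κ(H)`: it meets every club of `P_κ(H)`. -/
def IsStationaryIn (κ : Cardinal.{u}) {H : Type u} (S : Set (Set H)) : Prop :=
  ∀ C : Set (Set H), IsClubIn κ C → (S ∩ C).Nonempty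


/-- small union of small sets is small -/
lemma mk_sUnion_lt {α : Type u} {κ : Cardinal.{u}} (hreg : κ.IsRegular)
    {D : Set (Set α)} (hD : #D < κ) (hmem : ∀ s ∈ D, #s < κ) : #(⋃₀ D) < κ := by
  refine (Cardinal.mk_sUnion_le D).trans_lt (Cardinal.mul_lt_of_lt hreg.aleph0_le hD ?_)
  exact Cardinal.iSup_lt_of_isRegular hreg hD fun s => hmem s s.2

lemma isClubIn_superset {κ : Cardinal.{u}} (hreg : κ.IsRegular) {H : Type u}
    {x : Set H} (hx : #x < κ) : IsClubIn κ {y : Set H | #y < κ ∧ x ⊆ y} := by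
  refine ⟨fun y hy => hy.1, fun z hz =>
    ⟨z ∪ x, ⟨?_, Set.subset_union_right⟩, Set.subset_union_left⟩, ?_⟩
  · exact (Cardinal.mk_union_le _ _).trans_lt (Cardinal.add_lt_of_lt hreg.aleph0_le hz hx)
  · rintro D hD ⟨d, hd⟩ _ hDκ
    exact ⟨mk_sUnion_lt hreg hDκ (fun s hs => (hD hs).1),
      (hD hd).2.trans (Set.subset_sUnion_of_mem hd)⟩

/-- projection lemma -/
lemma exists_proj [PartialOrder P] {M : Set P} (hM : IsRegularSuborder M) (p : P) :
    ∃ q ∈ M, ∀ r ∈ M, r ≤ q → ∃ s : P, s ≤ r ∧ s ≤ p := by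
  by_contra hcon
  push_neg at hcon
  set D : Set P := {r | r ∈ M ∧ ∀ s : P, ¬(s ≤ r ∧ s ≤ p)} with hDdef
  have hdense : ∀ q ∈ M, ∃ r ∈ D, r ≤ q := by
    intro q hq
    obtain ⟨r, hrM, hrq, hr⟩ := hcon q hq
    exact ⟨r, ⟨hrM, fun s hs => hr s hs.1 hs.2⟩, hrq⟩
  have hz : ∀ c ⊆ {A : Set P | A ⊆ D ∧ IsAntichainIn M A}, IsChain (· ⊆ ·) c →
      ∃ ub ∈ {A : Set P | A ⊆ D ∧ IsAntichainIn M A}, ∀ s ∈ c, s ⊆ ub := by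
    intro c hc hchain
    refine ⟨⋃₀ c, ⟨?_, ?_, ?_⟩, fun s hs => Set.subset_sUnion_of_mem hs⟩
    · exact Set.sUnion_subset fun A hA => (hc hA).1
    · exact Set.sUnion_subset fun A hA => (hc hA).2.1
    · rintro a ⟨A1, hA1, ha⟩ b ⟨A2, hA2, hb⟩ hab
      rcases hchain.total hA1 hA2 with h | h
      · exact (hc hA2).2.2 a (h ha) b hb hab
      · exact (hc hA1).2.2 a ha b (h hb) hab
  obtain ⟨A, hAmax⟩ := zorn_subset {A : Set P | A ⊆ D ∧ IsAntichainIn M A} hz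
  have hAD : A ⊆ D := hAmax.1.1
  have hmaxM : IsMaxAntichainIn M A := by
    refine ⟨hAmax.1.2, fun p' hp' => ?_⟩
    obtain ⟨r, hrD, hrp'⟩ := hdense p' hp'
    have hrM : r ∈ M := hrD.1
    have hcompat : ∃ a ∈ A, CompatIn M r a := by
      by_contra hno
      push_neg at hno
      have hmem : A ∪ {r} ∈ {A : Set P | A ⊆ D ∧ IsAntichainIn M A} := by
        refine ⟨Set.union_subset hAD (by simpa using hrD), ?_, ?_⟩
        · exact Set.union_subset hAmax.1.2.1 (by simpa using hrM)
        · rintro a (ha | ha) b (hb | hb) hab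
          · exact hAmax.1.2.2 a ha b hb hab
          · rcases hb with rfl
            intro ⟨s, hsM, hsa, hsb⟩
            exact hno a ha ⟨s, hsM, hsb, hsa⟩
          · rcases ha with rfl
            exact hno b hb
          · rcases ha with rfl; rcases hb with rfl; exact absurd rfl hab
      have : r ∈ A := hAmax.2 hmem Set.subset_union_left (Set.mem_union_right _ rfl)
      exact hno r this ⟨r, hrM, le_refl r, le_refl r⟩
    obtain ⟨a, haA, s, hsM, hsr, hsa⟩ := hcompat
    exact ⟨a, haA, s, hsM, hsr.trans hrp', hsa⟩
  obtain ⟨a, haA, s, _, hsp, hsa⟩ := (hM.2 A hmaxM).2 p (Set.mem_univ p)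
  exact (hAD haA).2 s ⟨hsa, hsp⟩

lemma isChain_range_of_mono {H : Type u} {g : ℕ → Set H} (h : Monotone g) :
    IsChain (· ⊆ ·) (Set.range g) := by
  rintro _ ⟨n, rfl⟩ _ ⟨m, rfl⟩ _
  rcases le_total n m with hnm | hnm
  · exact Or.inl (h hnm)
  · exact Or.inr (h hnm)

lemma mk_range_nat_lt {H : Type u} {κ : Cardinal.{u}} (hunc : ℵ₀ < κ) (g : ℕ → Set H) :
    #(Set.range g) < κ := by
  haveI := (Set.countable_range g).to_subtype
  exact lt_of_le_of_lt mk_le_aleph0 hunc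

/-- a small family of clubs has cofinal intersection -/
lemma exists_mem_inter_clubs {κ : Cardinal.{u}} (hreg : κ.IsRegular) (hunc : ℵ₀ < κ)
    {H : Type u} {I : Set H} (hI : #I < κ) {C : H → Set (Set H)}
    (hC : ∀ y ∈ I, IsClubIn κ (C y)) {x : Set H} (hx : #x < κ) :
    ∃ N : Set H, #N < κ ∧ x ⊆ N ∧ ∀ y ∈ I, N ∈ C y := by
  classical
  -- one-step extension into C y
  set ext : H → Set H → Set H := fun y A =>
    if h : y ∈ I ∧ #A < κ then ((hC y h.1).2.1 A h.2).choose else A with hextdef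
  have hext : ∀ y ∈ I, ∀ A : Set H, #A < κ → ext y A ∈ C y ∧ A ⊆ ext y A := by
    intro y hy A hA
    have h : y ∈ I ∧ #A < κ := ⟨hy, hA⟩
    obtain ⟨h1, h2⟩ := ((hC y h.1).2.1 A h.2).choose_spec
    simpa [hextdef, dif_pos h] using And.intro h1 h2
  set step : Set H → Set H := fun A => A ∪ ⋃₀ ((fun y => ext y A) '' I) with hstepdef
  have hstep_small : ∀ A : Set H, #A < κ → #(step A) < κ := by
    intro A hA
    refine (Cardinal.mk_union_le _ _).trans_lt (Cardinal.add_lt_of_lt hreg.aleph0_le hA ?_)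
    refine mk_sUnion_lt hreg (lt_of_le_of_lt Cardinal.mk_image_le hI) ?_
    rintro _ ⟨y, hy, rfl⟩
    exact (hC y hy).1 _ (hext y hy A hA).1
  set N : ℕ → Set H := fun n => Nat.rec x (fun _ A => step A) n with hNdef
  have hN0 : N 0 = x := rfl
  have hNsucc : ∀ n, N (n + 1) = step (N n) := fun n => rfl
  have hNsmall : ∀ n, #(N n) < κ := by
    intro n; induction n with
    | zero => exact hx
    | succ n ih => rw [hNsucc]; exact hstep_small _ ih
  have hNmono : Monotone N := by
    apply monotone_nat_of_le_succ
    intro n; rw [hNsucc]; exact Set.subset_union_left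
  have hNext : ∀ n, ∀ y ∈ I, ext y (N n) ∈ C y ∧ N n ⊆ ext y (N n) ∧ ext y (N n) ⊆ N (n + 1) := by
    intro n y hy
    obtain ⟨h1, h2⟩ := hext y hy (N n) (hNsmall n)
    refine ⟨h1, h2, ?_⟩
    rw [hNsucc, hstepdef]
    exact (Set.subset_sUnion_of_mem (Set.mem_image_of_mem (fun y => ext y (N n)) hy)).trans
      Set.subset_union_right
  refine ⟨⋃₀ Set.range N, mk_sUnion_lt hreg (mk_range_nat_lt hunc N) (by rintro _ ⟨n, rfl⟩; exact hNsmall n), ?_, ?_⟩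
  · rw [← hN0]; exact Set.subset_sUnion_of_mem ⟨0, rfl⟩
  · intro y hy
    have heq : ⋃₀ Set.range (fun n => ext y (N n)) = ⋃₀ Set.range N := by
      apply Set.Subset.antisymm
      · refine Set.sUnion_subset ?_
        rintro _ ⟨n, rfl⟩
        exact (hNext n y hy).2.2.trans (Set.subset_sUnion_of_mem ⟨n + 1, rfl⟩)
      · refine Set.sUnion_subset ?_
        rintro _ ⟨n, rfl⟩
        exact (hNext n y hy).2.1.trans (Set.subset_sUnion_of_mem ⟨n, rfl⟩)
    rw [← heq]
    refine (hC y hy).2.2 _ ?_ ⟨_, ⟨0, rfl⟩⟩ ?_ (mk_range_nat_lt hunc _)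
    · rintro _ ⟨n, rfl⟩; exact (hNext n y hy).1
    · refine isChain_range_of_mono ?_
      apply monotone_nat_of_le_succ
      intro n
      exact ((hNext n y hy).2.2).trans (hNext (n+1) y hy).2.1

/-- pressing down for strongly stationary sets -/
lemma fodor {κ : Cardinal.{u}} (hreg : κ.IsRegular) (hunc : ℵ₀ < κ) {H : Type u}
    {S : Set (Set H)} (hS : IsStationaryIn κ S) {f : Set H → H}
    (hf : ∀ M ∈ S, f M ∈ M) :
    ∃ q : H, IsStationaryIn κ {M | M ∈ S ∧ f M = q} := by
  classical
  by_contra hcon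
  push_neg at hcon
  have hcon' : ∀ q : H, ∃ C : Set (Set H), IsClubIn κ C ∧ {M | M ∈ S ∧ f M = q} ∩ C = ∅ := by
    intro q
    have h' := hcon q
    rw [IsStationaryIn] at h'
    push_neg at h'
    obtain ⟨C, hC1, hC2⟩ := h'
    exact ⟨C, hC1, hC2⟩
  choose C hCclub hCdisj using hcon'
  -- the diagonal intersection
  set D : Set (Set H) := {M | #M < κ ∧ ∀ y ∈ M, M ∈ C y} with hDdef
  have hDclub : IsClubIn κ D := by
    refine ⟨fun M hM => hM.1, ?_, ?_⟩
    · -- cofinality via an ω-chain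
      intro x hx
      set step : Set H → Set H := fun A =>
        if h : #A < κ then
          (exists_mem_inter_clubs hreg hunc h (fun y _ => hCclub y) h).choose else A
        with hstepdef
      have hstep : ∀ A : Set H, #A < κ →
          #(step A) < κ ∧ A ⊆ step A ∧ ∀ y ∈ A, step A ∈ C y := by
        intro A hA
        obtain ⟨h1, h2, h3⟩ :=
          (exists_mem_inter_clubs hreg hunc hA (fun y _ => hCclub y) hA).choose_spec
        simpa [hstepdef, dif_pos hA] using And.intro h1 (And.intro h2 h3)
      set N : ℕ → Set H := fun n => Nat.rec x (fun _ A => step A) n with hNdef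
      have hNsucc : ∀ n, N (n + 1) = step (N n) := fun n => rfl
      have hNsmall : ∀ n, #(N n) < κ := by
        intro n; induction n with
        | zero => exact hx
        | succ n ih => rw [hNsucc]; exact (hstep _ ih).1
      have hNmono : Monotone N := by
        apply monotone_nat_of_le_succ
        intro n; rw [hNsucc]; exact (hstep _ (hNsmall n)).2.1
      have hNC : ∀ n, ∀ y ∈ N n, N (n + 1) ∈ C y := by
        intro n y hy; rw [hNsucc]; exact (hstep _ (hNsmall n)).2.2 y hy
      set M : Set H := ⋃₀ Set.range N with hMdef
      have hMsmall : #M < κ :=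
        mk_sUnion_lt hreg (mk_range_nat_lt hunc N) (by rintro _ ⟨n, rfl⟩; exact hNsmall n)
      refine ⟨M, ⟨hMsmall, ?_⟩, Set.subset_sUnion_of_mem ⟨0, rfl⟩⟩
      intro y hy
      obtain ⟨_, ⟨k, rfl⟩, hyk⟩ := hy
      have heq : ⋃₀ Set.range (fun n => N (k + n + 1)) = M := by
        apply Set.Subset.antisymm
        · exact Set.sUnion_subset (by rintro _ ⟨n, rfl⟩; exact Set.subset_sUnion_of_mem ⟨k + n + 1, rfl⟩)
        · refine Set.sUnion_subset ?_
          rintro _ ⟨n, rfl⟩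
          exact (hNmono (show n ≤ k + n + 1 by omega)).trans
            (Set.subset_sUnion_of_mem ⟨n, rfl⟩)
      rw [← heq]
      refine (hCclub y).2.2 _ ?_ ⟨_, ⟨0, rfl⟩⟩ ?_ (mk_range_nat_lt hunc _)
      · rintro _ ⟨n, rfl⟩
        exact hNC (k + n) y (hNmono (Nat.le_add_right k n) hyk)
      · exact isChain_range_of_mono
          (monotone_nat_of_le_succ fun n => hNmono (show k + n + 1 ≤ k + (n+1) + 1 by omega))
    · -- chain closure
      rintro D' hD' ⟨M₀, hM₀⟩ hchain hD'κ
      refine ⟨mk_sUnion_lt hreg hD'κ (fun s hs => (hD' hs).1), ?_⟩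
      intro y hy
      obtain ⟨M₁, hM₁D, hyM₁⟩ := hy
      set Dy : Set (Set H) := {N | N ∈ D' ∧ y ∈ N} with hDydef
      have heq : ⋃₀ Dy = ⋃₀ D' := by
        apply Set.Subset.antisymm (Set.sUnion_subset fun s hs => Set.subset_sUnion_of_mem hs.1)
        refine Set.sUnion_subset ?_
        intro N' hN'
        rcases eq_or_ne N' M₁ with rfl | hne
        · exact Set.subset_sUnion_of_mem ⟨hN', hyM₁⟩
        · rcases hchain hN' hM₁D hne with h | h
          · exact h.trans (Set.subset_sUnion_of_mem ⟨hM₁D, hyM₁⟩)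
          · exact Set.subset_sUnion_of_mem ⟨hN', h hyM₁⟩
      rw [← heq]
      refine (hCclub y).2.2 _ ?_ ⟨M₁, hM₁D, hyM₁⟩ ?_ ?_
      · rintro N ⟨hND, hyN⟩
        exact (hD' hND).2 y hyN
      · exact fun a ha b hb hne => hchain ha.1 hb.1 hne
      · exact lt_of_le_of_lt (Cardinal.mk_le_mk_of_subset fun N hN => hN.1) hD'κ
  obtain ⟨M, hMS, hMD⟩ := hS D hDclub
  have hyM : f M ∈ M := hf M hMS
  have : M ∈ {N | N ∈ S ∧ f N = f M} ∩ C (f M) := ⟨⟨hMS, rfl⟩, hMD.2 (f M) hyM⟩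
  rw [hCdisj (f M)] at this
  exact this

/-- Lemma: stationary layering implies the Knaster property.  If `κ` is a
regular uncountable cardinal, `|P| ≥ κ`, and `P` is κ stationarily layered (the set of
`< κ`-sized regular suborders of `P` is stationary in `P_κ(P)`), then `P` is κ-Knaster:
every `X ⊆ P` with `|X| = κ` has a `Y ⊆ X` with `|Y| = κ` whose elements are pairwise
compatible in `P`. -/
theorem layered_implies_knaster [PartialOrder P] (κ : Cardinal.{u})
    (hreg : κ.IsRegular) (hunc : ℵ₀ < κ) (hPbig : κ ≤ #P)
    (hlay : IsStationaryIn κ {X : Set P | #X < κ ∧ IsRegularSuborder X}) :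
    ∀ X : Set P, #X = κ →
      ∃ Y : Set P, Y ⊆ X ∧ #Y = κ ∧ ∀ p ∈ Y, ∀ q ∈ Y, ∃ r : P, r ≤ p ∧ r ≤ q := by
  classical
  intro X hX
  have hPne : Nonempty P :=
    Cardinal.mk_ne_zero_iff.mp ((Cardinal.aleph0_pos.trans hunc).trans_le hPbig).ne'
  obtain ⟨p0⟩ := hPne
  set S : Set (Set P) := {M : Set P | #M < κ ∧ IsRegularSuborder M} with hSdef
  set pfun : Set P → P := fun M => if h : (X \ M).Nonempty then h.choose else p0 with hpfundef
  have hpfun : ∀ M ∈ S, pfun M ∈ X \ M := by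
    intro M hM
    have hne : (X \ M).Nonempty := by
      by_contra hno
      rw [Set.not_nonempty_iff_eq_empty, Set.diff_eq_empty] at hno
      exact absurd (hX ▸ Cardinal.mk_le_mk_of_subset hno) (not_le.mpr hM.1)
    simpa [hpfundef, dif_pos hne] using hne.choose_spec
  set qfun : Set P → P := fun M =>
    if h : IsRegularSuborder M then (exists_proj h (pfun M)).choose else p0 with hqfundef
  have hqfun : ∀ M ∈ S, qfun M ∈ M ∧
      ∀ r ∈ M, r ≤ qfun M → ∃ s : P, s ≤ r ∧ s ≤ pfun M := by
    intro M hM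
    have hspec := (exists_proj hM.2 (pfun M)).choose_spec
    have : qfun M = (exists_proj hM.2 (pfun M)).choose := by
      simp [hqfundef, dif_pos hM.2]
    rw [this]
    exact hspec
  obtain ⟨q, hT⟩ := fodor hreg hunc hlay (f := qfun) (fun M hM => (hqfun M hM).1)
  set T : Set (Set P) := {M | M ∈ S ∧ qfun M = q} with hTdef
  -- Zorn's lemma to find a maximal "linked" family
  set 𝒲 : Set (Set (Set P)) :=
    {W | W ⊆ T ∧ ∀ M ∈ W, ∀ M' ∈ W, M ≠ M' → pfun M ∈ M' ∨ pfun M' ∈ M} with h𝒲def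
  have hz : ∀ c ⊆ 𝒲, IsChain (· ⊆ ·) c → ∃ ub ∈ 𝒲, ∀ s ∈ c, s ⊆ ub := by
    intro c hc hchain
    refine ⟨⋃₀ c, ⟨Set.sUnion_subset fun W hW => (hc hW).1, ?_⟩,
      fun s hs => Set.subset_sUnion_of_mem hs⟩
    rintro M ⟨W1, hW1, hM⟩ M' ⟨W2, hW2, hM'⟩ hne
    rcases hchain.total hW1 hW2 with h | h
    · exact (hc hW2).2 M (h hM) M' hM' hne
    · exact (hc hW1).2 M hM M' (h hM') hne
  obtain ⟨W, hW⟩ := zorn_subset 𝒲 hz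
  have hWT : W ⊆ T := hW.1.1
  set Y : Set P := pfun '' W with hYdef
  have hYX : Y ⊆ X := by
    rintro _ ⟨M, hM, rfl⟩
    exact (hpfun M (hWT hM).1).1
  have hYle : #Y ≤ κ := hX ▸ Cardinal.mk_le_mk_of_subset hYX
  have hYκ : #Y = κ := by
    by_contra hne
    have hYlt : #Y < κ := lt_of_le_of_ne hYle hne
    obtain ⟨Mstar, hMstarT, hMstarC⟩ := hT _ (isClubIn_superset hreg hYlt)
    have hMstarW : Mstar ∉ W := fun h =>
      (hpfun Mstar hMstarT.1).2 (hMstarC.2 (Set.mem_image_of_mem pfun h))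
    have hmem : W ∪ {Mstar} ∈ 𝒲 := by
      refine ⟨Set.union_subset hWT (by simpa using hMstarT), ?_⟩
      rintro M (hM | hM) M' (hM' | hM') hne'
      · exact hW.1.2 M hM M' hM' hne'
      · rcases hM' with rfl
        exact Or.inl (hMstarC.2 (Set.mem_image_of_mem pfun hM))
      · rcases hM with rfl
        exact Or.inr (hMstarC.2 (Set.mem_image_of_mem pfun hM'))
      · rcases hM with rfl; rcases hM' with rfl; exact absurd rfl hne'
    have : Mstar ∈ W := hW.2 hmem Set.subset_union_left (Set.mem_union_right _ rfl)
    exact hMstarW this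
  have key : ∀ M ∈ W, ∀ M' ∈ W, pfun M ∈ M' →
      ∃ r : P, r ≤ pfun M ∧ r ≤ pfun M' := by
    intro M hM M' hM' hmem
    have hMT : M ∈ T := hWT hM
    have hM'T : M' ∈ T := hWT hM'
    obtain ⟨s, hs1, hs2⟩ := (hqfun M hMT.1).2 (qfun M) (hqfun M hMT.1).1 (le_refl _)
    have hqM' : q ∈ M' := hM'T.2 ▸ (hqfun M' hM'T.1).1
    have hcompat : CompatIn M' (pfun M) q :=
      hM'T.1.2.1 (pfun M) hmem q hqM'
        ⟨s, Set.mem_univ s, hs2, hMT.2 ▸ hs1⟩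
    obtain ⟨t, htM', ht1, ht2⟩ := hcompat
    have ht2' : t ≤ qfun M' := by rw [hM'T.2]; exact ht2
    obtain ⟨u, hu1, hu2⟩ := (hqfun M' hM'T.1).2 t htM' ht2'
    exact ⟨u, hu1.trans ht1, hu2⟩
  refine ⟨Y, hYX, hYκ, ?_⟩
  rintro _ ⟨M, hM, rfl⟩ _ ⟨M', hM', rfl⟩
  rcases eq_or_ne M M' with rfl | hne
  · exact ⟨pfun M, le_refl _, le_refl _⟩
  · rcases hW.1.2 M hM M' hM' hne with h | h
    · exact key M hM M' hM' h
    · obtain ⟨r, h1, h2⟩ := key M' hM' M hM h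
      exact ⟨r, h2, h1⟩

end Stmt0
end

section
/- Let κ be a regular uncountable cardinal and let P be a poset with |P| ≥ κ. If P is κ weakly stationarily layered (i.e. the set of regular suborders of P of size < κ is weakly stationary in P_κ(P)), then P has the κ-chain condition: every antichain of P has cardinality < κ. -/
/-!
STATEMENT 1: If a poset `P` with `|P| ≥ κ` (κ regular uncountable) is
κ weakly stationarily layered, then `P` has the κ-chain condition.
-/

open Cardinal

universe u

namespace Stmt1

variable {P : Type u}

/-- Two conditions are compatible within `S`: they have a common lower bound lying in `S`. -/
def CompatIn [PartialOrder P] (S : Set P) (p q : P) : Prop :=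
  ∃ r ∈ S, r ≤ p ∧ r ≤ q

/-- `X` (with the order inherited from `P`) is a suborder of `P`: any two elements of `X`
that are incompatible in `X` are incompatible in `P`. -/
def IsSuborder [PartialOrder P] (X : Set P) : Prop :=
  ∀ p ∈ X, ∀ q ∈ X, CompatIn (Set.univ : Set P) p q → CompatIn X p q

/-- `A` is an antichain of the suborder `S`. -/
def IsAntichainIn [PartialOrder P] (S A : Set P) : Prop :=
  A ⊆ S ∧ ∀ p ∈ A, ∀ q ∈ A, p ≠ q → ¬ CompatIn S p q

/-- `A` is a maximal antichain of the suborder `S`. -/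
def IsMaxAntichainIn [PartialOrder P] (S A : Set P) : Prop :=
  IsAntichainIn S A ∧ ∀ p ∈ S, ∃ a ∈ A, CompatIn S p a

/-- `X` is a regular suborder of `P`. -/
def IsRegularSuborder [PartialOrder P] (X : Set P) : Prop :=
  IsSuborder X ∧ ∀ A : Set P, IsMaxAntichainIn X A → IsMaxAntichainIn (Set.univ : Set P) A

/-- `S` is weakly stationary in `P_κ(H)`: for every `F : [H]^{<ω} → H` there is an
`X ∈ S` closed under `F`. -/
def IsWeaklyStationaryIn {H : Type u} (S : Set (Set H)) : Prop :=
  ∀ F : Finset H → H, ∃ X ∈ S, ∀ t : Finset H, ↑t ⊆ X → F t ∈ X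

/-- Shelah. If `κ` is a regular uncountable cardinal, `|P| ≥ κ`, and the
set of `< κ`-sized regular suborders of `P` is weakly stationary in `P_κ(P)`, then `P` is
κ-cc: every antichain of `P` has cardinality `< κ`. -/
theorem weakly_layered_implies_cc [PartialOrder P] (κ : Cardinal.{u})
    (hreg : κ.IsRegular) (hunc : ℵ₀ < κ) (hPbig : κ ≤ #P)
    (hlay : IsWeaklyStationaryIn {X : Set P | #X < κ ∧ IsRegularSuborder X}) :
    ∀ A : Set P, (∀ p ∈ A, ∀ q ∈ A, p ≠ q → ¬ ∃ r : P, r ≤ p ∧ r ≤ q) → #A < κ := by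
  classical
  intro A hA
  by_contra hlt
  push_neg at hlt
  have hPne : Nonempty P :=
    Cardinal.mk_ne_zero_iff.mp (ne_of_gt (lt_of_lt_of_le (aleph0_pos.trans hunc) hPbig))
  -- Extend A to a maximal antichain m via Zorn
  set Fam : Set (Set P) := {S | A ⊆ S ∧ ∀ p ∈ S, ∀ q ∈ S, p ≠ q → ¬ ∃ r : P, r ≤ p ∧ r ≤ q}
    with hFam
  have hAF : A ∈ Fam := ⟨subset_rfl, hA⟩
  obtain ⟨m, hAm, hmF, hmax⟩ : ∃ m, A ⊆ m ∧ Maximal (· ∈ Fam) m := by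
    apply zorn_subset_nonempty Fam ?_ A hAF
    intro c hcF hchain hcne
    refine ⟨⋃₀ c, ⟨?_, ?_⟩, fun s hs => Set.subset_sUnion_of_mem hs⟩
    · obtain ⟨s, hs⟩ := hcne
      exact (hcF hs).1.trans (Set.subset_sUnion_of_mem hs)
    · rintro p ⟨s, hs, hps⟩ q ⟨t, ht, hqt⟩ hpq
      rcases hchain.total hs ht with h | h
      · exact (hcF ht).2 p (h hps) q hqt hpq
      · exact (hcF hs).2 p hps q (h hqt) hpq
  have hmAC : ∀ p ∈ m, ∀ q ∈ m, p ≠ q → ¬ ∃ r : P, r ≤ p ∧ r ≤ q := hmF.2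
  -- m is a maximal antichain: every p is compatible with some element of m
  have hmaxAC : ∀ p : P, ∃ a ∈ m, ∃ r : P, r ≤ p ∧ r ≤ a := by
    intro p
    by_contra hno
    push_neg at hno
    have hpm : p ∉ m := fun hp => hno p hp p le_rfl le_rfl
    have : m ∪ {p} ∈ Fam := by
      refine ⟨hAm.trans Set.subset_union_left, ?_⟩
      rintro x (hx | hx) y (hy | hy) hxy
      · exact hmAC x hx y hy hxy
      · rcases hy with rfl
        rintro ⟨r, hr1, hr2⟩
        exact hno x hx r hr2 hr1
      · rcases hx with rfl
        rintro ⟨r, hr1, hr2⟩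
        exact hno y hy r hr1 hr2
      · rcases hx with rfl; rcases hy with rfl; exact absurd rfl hxy
    have := hmax this Set.subset_union_left
    exact hpm (this (Set.mem_union_right _ rfl))
  -- choose witnesses
  have hsel : ∀ p : P, ∃ ar : P × P, ar.1 ∈ m ∧ ar.2 ≤ p ∧ ar.2 ≤ ar.1 ∧
      (p ∈ m → ar.1 = p ∧ ar.2 = p) := by
    intro p
    by_cases hp : p ∈ m
    · exact ⟨(p, p), hp, le_rfl, le_rfl, fun _ => ⟨rfl, rfl⟩⟩
    · obtain ⟨a, ham, r, h1, h2⟩ := hmaxAC p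
      exact ⟨(a, r), ham, h1, h2, fun h => absurd h hp⟩
  choose ar ham hrle hrlea hmem using hsel
  set a : P → P := fun p => (ar p).1 with ha
  set r : P → P := fun p => (ar p).2 with hr
  have hap : ∀ p : P, p ≠ a p → p ∉ m := by
    intro p hne hp
    exact hne ((hmem p hp).1).symm
  -- the closure function
  obtain ⟨F, hF⟩ : ∃ F : Finset P → P, ∀ t, F t =
      if h2 : ∃ p, t = ({p, a p} : Finset P) ∧ p ≠ a p then r h2.choose
      else if h1 : ∃ p, t = ({p} : Finset P) then a h1.choose
      else Classical.arbitrary P := ⟨_, fun _ => rfl⟩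
  have hFsingle : ∀ p : P, F {p} = a p := by
    intro p
    rw [hF _]
    have h2 : ¬ ∃ q, ({p} : Finset P) = ({q, a q} : Finset P) ∧ q ≠ a q := by
      rintro ⟨q, heq, hne⟩
      have : ({q, a q} : Finset P).card = 2 := Finset.card_pair hne
      rw [← heq, Finset.card_singleton] at this
      omega
    have h1 : ∃ q, ({p} : Finset P) = ({q} : Finset P) := ⟨p, rfl⟩
    simp only [h2, dif_neg, not_false_iff, h1, dif_pos]
    have := h1.choose_spec
    rw [Finset.singleton_inj] at this
    rw [← this]
  have hFpair : ∀ p : P, p ≠ a p → F {p, a p} ≤ p ∧ F {p, a p} ≤ a p := by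
    intro p hne
    rw [hF _]
    have h2 : ∃ q, ({p, a p} : Finset P) = ({q, a q} : Finset P) ∧ q ≠ a q :=
      ⟨p, rfl, hne⟩
    simp only [h2, dif_pos]
    obtain ⟨heq, hqne⟩ := h2.choose_spec
    have hqmem : h2.choose ∈ ({p, a p} : Finset P) :=
      (Finset.ext_iff.mp heq _).mpr (Finset.mem_insert_self _ _)
    rw [Finset.mem_insert, Finset.mem_singleton] at hqmem
    rcases hqmem with hq1 | hq2
    · -- h2.choose = p, identify a h2.choose with a p
      have hapm : a p ∈ ({h2.choose, a h2.choose} : Finset P) :=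
        (Finset.ext_iff.mp heq _).mp (by simp)
      rw [Finset.mem_insert, Finset.mem_singleton] at hapm
      rcases hapm with h | h
      · exact absurd (h.trans hq1).symm hne
      · exact ⟨le_of_le_of_eq (hrle _) hq1, le_of_le_of_eq (hrlea _) h.symm⟩
    · -- h2.choose = a p, then it is in m so a _ = _, contradiction
      exfalso
      have : h2.choose ∈ m := by rw [hq2]; exact ham p
      exact hqne ((hmem _ this).1).symm
  -- apply weak stationarity
  obtain ⟨X, ⟨hXcard, hXsub, hXreg⟩, hXcl⟩ := hlay F
  -- M := m ∩ X is a maximal antichain in X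
  have hM : IsMaxAntichainIn X (m ∩ X) := by
    refine ⟨⟨Set.inter_subset_right, ?_⟩, ?_⟩
    · rintro p ⟨hpm, _⟩ q ⟨hqm, _⟩ hpq ⟨s, _, hs1, hs2⟩
      exact hmAC p hpm q hqm hpq ⟨s, hs1, hs2⟩
    · intro p hpX
      by_cases hpm : p ∈ m
      · exact ⟨p, ⟨hpm, hpX⟩, p, hpX, le_rfl, le_rfl⟩
      · have hne : p ≠ a p := fun h => hpm (h ▸ ham p)
        have haX : a p ∈ X := by
          have := hXcl {p} (by simpa using hpX)
          rwa [hFsingle p] at this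
        have hrX : F {p, a p} ∈ X := by
          apply hXcl
          intro x hx
          simp only [Finset.coe_insert, Finset.coe_singleton, Set.mem_insert_iff,
            Set.mem_singleton_iff] at hx
          rcases hx with rfl | rfl
          · exact hpX
          · exact haX
        obtain ⟨h1, h2⟩ := hFpair p hne
        exact ⟨a p, ⟨ham p, haX⟩, F {p, a p}, hrX, h1, h2⟩
  have hMuniv : IsMaxAntichainIn (Set.univ : Set P) (m ∩ X) := hXreg _ hM
  -- find an element of A outside X
  have hAX : ¬ A ⊆ X := by
    intro h
    exact absurd (lt_of_le_of_lt (Cardinal.mk_le_mk_of_subset h) hXcard) (not_lt.mpr hlt)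
  obtain ⟨a0, ha0A, ha0X⟩ := Set.not_subset.mp hAX
  obtain ⟨b, ⟨hbm, hbX⟩, s, _, hs1, hs2⟩ := hMuniv.2 a0 (Set.mem_univ a0)
  have hne : a0 ≠ b := fun h => ha0X (h ▸ hbX)
  exact hmAC a0 (hAm ha0A) b hbm hne ⟨s, hs1, hs2⟩

end Stmt1
end

section
/- Let C be a complete Boolean algebra, let Q ⊆ C∖{0} be dense in C∖{0} (every nonzero element of C lies above some member of Q), and let P be a regular suborder of Q (both with the order inherited from C). Define B(P) := {sup_C X : X ⊆ P}. Then B(P) is a Boolean subalgebra of C closed under suprema (computed in C) of all of its subsets, every maximal antichain of B(P)∖{0} is a maximal antichain of C∖{0}, and P is dense in B(P)∖{0}. -/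
/-!
STATEMENT 6 (Hamkins): If `Q` is dense in `C∖{0}` (`C` a complete Boolean algebra) and
`P` is a regular suborder of `Q`, then `B(P) := {sup X : X ⊆ P}` is a complete regular
subalgebra of `C` in which `P` is dense.
-/

universe u

namespace Stmt6

variable {C : Type u}

/-- Compatibility within the subset `S` of `C`: a common lower bound lying in `S`. -/
def CompatIn [CompleteBooleanAlgebra C] (S : Set C) (p q : C) : Prop :=
  ∃ r ∈ S, r ≤ p ∧ r ≤ q

/-- `P` is a suborder of `Q` (both subsets of `C` with the inherited order):
`P ⊆ Q` and elements of `P` compatible in `Q` are compatible in `P`. -/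
def IsSuborderOf [CompleteBooleanAlgebra C] (Q P : Set C) : Prop :=
  P ⊆ Q ∧ ∀ p ∈ P, ∀ q ∈ P, CompatIn Q p q → CompatIn P p q

/-- `A` is a maximal antichain of the suborder `S`. -/
def IsMaxAntichainIn [CompleteBooleanAlgebra C] (S A : Set C) : Prop :=
  (A ⊆ S ∧ ∀ p ∈ A, ∀ q ∈ A, p ≠ q → ¬ CompatIn S p q) ∧
  ∀ p ∈ S, ∃ a ∈ A, CompatIn S p a

/-- `P` is a regular suborder of `Q`. -/
def IsRegularSuborderOf [CompleteBooleanAlgebra C] (Q P : Set C) : Prop :=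
  IsSuborderOf Q P ∧ ∀ A : Set C, IsMaxAntichainIn P A → IsMaxAntichainIn Q A

/-- `B(P)`: the set of suprema (computed in `C`) of subsets of `P`. -/
def BofP [CompleteBooleanAlgebra C] (P : Set C) : Set C :=
  {c : C | ∃ X : Set C, X ⊆ P ∧ c = sSup X}

section Aux
variable [CompleteBooleanAlgebra C] {Q P : Set C}

lemma compat_of_inf (hQdense : ∀ c : C, c ≠ ⊥ → ∃ q ∈ Q, q ≤ c)
    (hsub : IsSuborderOf Q P) {p q : C} (hp : p ∈ P) (hq : q ∈ P)
    (h : p ⊓ q ≠ ⊥) : CompatIn P p q := by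
  obtain ⟨r, hrQ, hr⟩ := hQdense _ h
  exact hsub.2 p hp q hq ⟨r, hrQ, hr.trans inf_le_left, hr.trans inf_le_right⟩

/-- Key lemma: any nonzero `c` disjoint from all of `X ⊆ P` is compatible with
some `p ∈ P` disjoint from all of `X`. -/
lemma key (hQnz : ∀ q ∈ Q, q ≠ ⊥)
    (hQdense : ∀ c : C, c ≠ ⊥ → ∃ q ∈ Q, q ≤ c)
    (hreg : IsRegularSuborderOf Q P) {X : Set C} (hX : X ⊆ P)
    {c : C} (hc : c ≠ ⊥) (hcX : ∀ x ∈ X, x ⊓ c = ⊥) :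
    ∃ p ∈ P, (∀ x ∈ X, p ⊓ x = ⊥) ∧ p ⊓ c ≠ ⊥ := by
  obtain ⟨hsub, hmax⟩ := hreg
  set E : Set C := {p | p ∈ P ∧ ∀ x ∈ X, p ⊓ x = ⊥} with hE
  set D : Set C := {r | r ∈ P ∧ ((∃ x ∈ X, r ≤ x) ∨ r ∈ E)} with hD
  have hDP : D ⊆ P := fun r hr => hr.1
  have hdense : ∀ p ∈ P, ∃ r ∈ D, r ≤ p := by
    intro p hp
    by_cases h : ∃ x ∈ X, p ⊓ x ≠ ⊥
    · obtain ⟨x, hx, hpx⟩ := h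
      obtain ⟨r, hrP, hr1, hr2⟩ := compat_of_inf hQdense hsub hp (hX hx) hpx
      exact ⟨r, ⟨hrP, Or.inl ⟨x, hx, hr2⟩⟩, hr1⟩
    · push_neg at h
      exact ⟨p, ⟨hp, Or.inr ⟨hp, h⟩⟩, le_rfl⟩
  obtain ⟨A, hA⟩ := zorn_subset {A : Set C | A ⊆ D ∧ A.Pairwise fun p q => p ⊓ q = ⊥} (by
    intro ch hch hchain
    refine ⟨⋃₀ ch, ⟨Set.sUnion_subset fun s hs => (hch hs).1, ?_⟩,
      fun s hs => Set.subset_sUnion_of_mem hs⟩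
    intro p hp q hq hpq
    obtain ⟨s, hs, hps⟩ := hp
    obtain ⟨t, ht, hqt⟩ := hq
    rcases hchain.total hs ht with h | h
    · exact (hch ht).2 (h hps) hqt hpq
    · exact (hch hs).2 hps (h hqt) hpq)
  have hAD : A ⊆ D := hA.1.1
  have hAmax : IsMaxAntichainIn P A := by
    refine ⟨⟨fun a ha => hDP (hAD ha), ?_⟩, ?_⟩
    · intro p hp q hq hpq hcompat
      obtain ⟨r, hrP, h1, h2⟩ := hcompat
      exact hQnz r (hsub.1 hrP) (le_bot_iff.1 ((le_inf h1 h2).trans_eq (hA.1.2 hp hq hpq)))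
    · intro p hp
      obtain ⟨r, hrD, hrp⟩ := hdense p hp
      have hrP : r ∈ P := hDP hrD
      have hra : ∃ a ∈ A, r ⊓ a ≠ ⊥ := by
        by_contra h
        push_neg at h
        have hins : insert r A ∈ {A : Set C | A ⊆ D ∧ A.Pairwise fun p q => p ⊓ q = ⊥} := by
          refine ⟨Set.insert_subset hrD hAD, Set.pairwise_insert.2 ⟨hA.1.2, ?_⟩⟩
          intro b hb _
          exact ⟨h b hb, by rw [inf_comm]; exact h b hb⟩
        have : r ∈ A := hA.2 hins (Set.subset_insert r A) (Set.mem_insert r A)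
        exact hQnz r (hsub.1 hrP) (by simpa using h r this)
      obtain ⟨a, haA, hra⟩ := hra
      obtain ⟨s, hsP, hs1, hs2⟩ := compat_of_inf hQdense hsub hrP (hDP (hAD haA)) hra
      exact ⟨a, haA, s, hsP, hs1.trans hrp, hs2⟩
  obtain ⟨q, hqQ, hqc⟩ := hQdense c hc
  obtain ⟨a, haA, s, hsQ, hs1, hs2⟩ := (hmax A hAmax).2 q hqQ
  have hsne : s ≠ ⊥ := hQnz s hsQ
  have hsc : s ≤ c := hs1.trans hqc
  rcases (hAD haA).2 with ⟨x, hxX, hax⟩ | haE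
  · exact absurd (le_bot_iff.1 ((le_inf (hs2.trans hax) hsc).trans_eq (hcX x hxX))) hsne
  · exact ⟨a, haE.1, haE.2, fun h => hsne (le_bot_iff.1 ((le_inf hs2 hsc).trans_eq h))⟩

lemma compl_mem (hQnz : ∀ q ∈ Q, q ≠ ⊥)
    (hQdense : ∀ c : C, c ≠ ⊥ → ∃ q ∈ Q, q ≤ c)
    (hreg : IsRegularSuborderOf Q P) {b : C} (hb : b ∈ BofP P) : bᶜ ∈ BofP P := by
  obtain ⟨X, hX, rfl⟩ := hb
  set Y : Set C := {p | p ∈ P ∧ ∀ x ∈ X, p ⊓ x = ⊥} with hY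
  refine ⟨Y, fun p hp => hp.1, le_antisymm ?_ ?_⟩
  · by_contra h
    set c : C := (sSup X)ᶜ ⊓ (sSup Y)ᶜ with hcdef
    have hc : c ≠ ⊥ := by
      intro h0
      exact h (disjoint_compl_right_iff.1 (disjoint_iff.2 h0))
    have hcX : ∀ x ∈ X, x ⊓ c = ⊥ := by
      intro x hx
      have : x ⊓ c ≤ sSup X ⊓ (sSup X)ᶜ :=
        inf_le_inf (le_sSup hx) inf_le_left
      simpa using le_bot_iff.1 (this.trans_eq inf_compl_eq_bot')
    obtain ⟨p, hpP, hpX, hpc⟩ := key hQnz hQdense hreg hX hc hcX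
    have : p ⊓ c ≤ sSup Y ⊓ (sSup Y)ᶜ :=
      inf_le_inf (le_sSup ⟨hpP, hpX⟩) inf_le_right
    exact hpc (le_bot_iff.1 (this.trans_eq inf_compl_eq_bot'))
  · refine sSup_le fun p hp => le_compl_iff_disjoint_right.2 (disjoint_sSup_iff.2 ?_)
    exact fun x hx => disjoint_iff.2 (hp.2 x hx)

end Aux

/-- Hamkins.  Let `C` be a complete Boolean algebra, `Q ⊆ C∖{0}` dense in
`C∖{0}`, and `P` a regular suborder of `Q`.  Then `B(P) = {sup X : X ⊆ P}` is a Boolean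
subalgebra of `C` closed under arbitrary suprema, every maximal antichain of `B(P)∖{0}`
is a maximal antichain of `C∖{0}`, and `P` is dense in `B(P)∖{0}`. -/
theorem hamkins_subalgebra [CompleteBooleanAlgebra C] (Q P : Set C)
    (hQnz : ∀ q ∈ Q, q ≠ ⊥)
    (hQdense : ∀ c : C, c ≠ ⊥ → ∃ q ∈ Q, q ≤ c)
    (hreg : IsRegularSuborderOf Q P) :
    (∀ X : Set C, X ⊆ BofP P → sSup X ∈ BofP P) ∧
    (∀ b ∈ BofP P, bᶜ ∈ BofP P) ∧
    (∀ a ∈ BofP P, ∀ b ∈ BofP P, a ⊓ b ∈ BofP P) ∧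
    (∀ A : Set C, A ⊆ BofP P → (∀ a ∈ A, a ≠ ⊥) →
      (∀ a ∈ A, ∀ a' ∈ A, a ≠ a' → a ⊓ a' = ⊥) →
      (∀ b ∈ BofP P, b ≠ ⊥ → ∃ a ∈ A, a ⊓ b ≠ ⊥) →
      ∀ c : C, c ≠ ⊥ → ∃ a ∈ A, a ⊓ c ≠ ⊥) ∧
    (P ⊆ BofP P) ∧
    (∀ b ∈ BofP P, b ≠ ⊥ → ∃ p ∈ P, p ≤ b) := by
  have hsup : ∀ X : Set C, X ⊆ BofP P → sSup X ∈ BofP P := by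
    intro X hXB
    have hch : ∀ b : X, ∃ Z : Set C, Z ⊆ P ∧ (b : C) = sSup Z := fun b => hXB b.2
    choose f hf1 hf2 using hch
    refine ⟨⋃ b : X, f b, Set.iUnion_subset hf1, ?_⟩
    rw [sSup_iUnion]
    rw [sSup_eq_iSup']
    exact iSup_congr hf2
  have hcompl : ∀ b ∈ BofP P, bᶜ ∈ BofP P := fun b hb => compl_mem hQnz hQdense hreg hb
  refine ⟨hsup, hcompl, ?_, ?_, ?_, ?_⟩
  · intro a ha b hb
    have : a ⊓ b = (aᶜ ⊔ bᶜ)ᶜ := by rw [compl_sup, compl_compl, compl_compl]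
    rw [this]
    apply hcompl
    have : aᶜ ⊔ bᶜ = sSup {aᶜ, bᶜ} := by rw [sSup_pair]
    rw [this]
    apply hsup
    intro x hx
    rcases hx with h | h
    · exact h ▸ hcompl a ha
    · exact h ▸ hcompl b hb
  · intro A hAB _ _ hAmax c hc
    have hsA : sSup A = ⊤ := by
      by_contra h
      have hne : (sSup A)ᶜ ≠ ⊥ := fun h0 => h (by
        rw [← compl_compl (sSup A), h0, compl_bot])
      obtain ⟨a, haA, hab⟩ := hAmax _ (hcompl _ (hsup A hAB)) hne
      exact hab (le_bot_iff.1 ((inf_le_inf (le_sSup haA) le_rfl).trans_eq inf_compl_eq_bot'))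
    by_contra h
    push_neg at h
    apply hc
    have : c = c ⊓ sSup A := by rw [hsA, inf_top_eq]
    rw [this]
    exact disjoint_iff.1 (disjoint_sSup_iff.2 fun a ha =>
      disjoint_iff.2 (by rw [inf_comm]; exact h a ha))
  · exact fun p hp => ⟨{p}, Set.singleton_subset_iff.2 hp, (sSup_singleton).symm⟩
  · rintro b ⟨X, hX, rfl⟩ hb
    rcases X.eq_empty_or_nonempty with rfl | ⟨x, hx⟩
    · exact absurd sSup_empty hb
    · exact ⟨x, hX hx, le_sSup hx⟩


end Stmt6
end

section
/- Let κ be a regular uncountable cardinal. Then the poset Sacks(κ) is <κ-directed closed: every directed subset D ⊆ Sacks(κ) with |D| < κ has a lower bound in Sacks(κ); indeed, if D is nonempty then ⋂D ∈ Sacks(κ). -/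
universe u

namespace Stmt8

/-- A node of the tree `2^{<κ}`: a function `s : β → 2` for some ordinal `β`. -/
abbrev BNode : Type (u + 1) :=
  (β : Ordinal.{u}) × ({γ : Ordinal.{u} // γ < β} → Bool)

/-- The restriction `s↾α` of a node `s` to some `α ≤ dom s`. -/
def nrestrict (s : BNode.{u}) (α : Ordinal.{u}) (h : α ≤ s.1) : BNode.{u} :=
  ⟨α, fun γ => s.2 ⟨γ.1, lt_of_lt_of_le γ.2 h⟩⟩

/-- The one-step extension `s⌢b` of a node `s`. -/
noncomputable def extOne (s : BNode.{u}) (b : Bool) : BNode.{u} :=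
  ⟨s.1 + 1, fun γ => if h : γ.1 < s.1 then s.2 ⟨γ.1, h⟩ else b⟩

/-- `s` splits in `T`: both one-step extensions of `s` lie in `T`. -/
def Splits (T : Set BNode.{u}) (s : BNode.{u}) : Prop :=
  extOne s false ∈ T ∧ extOne s true ∈ T

/-- `T` is a subtree of `2^{<κ}`: nonempty, consisting of nodes of length `< κ`,
and closed under restrictions. -/
def IsSubtree (κ : Cardinal.{u}) (T : Set BNode.{u}) : Prop :=
  T.Nonempty ∧ (∀ s ∈ T, s.1 < κ.ord) ∧
  ∀ s ∈ T, ∀ α : Ordinal.{u}, ∀ h : α ≤ s.1, nrestrict s α h ∈ T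

/-- `T` is a condition of Kanamori's forcing `Sacks(κ)`. -/
def IsSacks (κ : Cardinal.{u}) (T : Set BNode.{u}) : Prop :=
  IsSubtree κ T ∧
  (∀ s : BNode.{u}, s.1 < κ.ord → Order.IsSuccLimit s.1 →
    (∀ β : Ordinal.{u}, ∀ h : β < s.1, nrestrict s β h.le ∈ T) → s ∈ T) ∧
  (∀ s ∈ T, ∃ t ∈ T, ∃ h : s.1 ≤ t.1, nrestrict t s.1 h = s ∧ Splits T t) ∧
  (∀ s ∈ T, Order.IsSuccLimit s.1 →
    (∀ β : Ordinal.{u}, β < s.1 → ∃ γ : Ordinal.{u}, β ≤ γ ∧ ∃ h : γ < s.1,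
      Splits T (nrestrict s γ h.le)) →
    Splits T s)

/-- The restriction `f↾α` of a branch `f : κ → 2` to an ordinal `α ≤ κ`. -/
def brestrict (κ : Cardinal.{u}) (f : {γ : Ordinal.{u} // γ < κ.ord} → Bool)
    (α : Ordinal.{u}) (h : α ≤ κ.ord) : BNode.{u} :=
  ⟨α, fun γ => f ⟨γ.1, lt_of_lt_of_le γ.2 h⟩⟩

/-!
For a node `s` of `⋂₀ D`, let `t T` be the least splitting extension of `s` in `T ∈ D`. It is
an initial segment of every splitting extension of `s` in `T`, so `t T` is an initial segment of
`t R` whenever `R ⊆ T`. By directedness the `t T` are pairwise compatible, and since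
`|D| < κ = cf κ` their union `v` has length `< κ`. In each `S ∈ D` the nodes `t R` with `R ⊆ S`
split and are cofinal in `v`: either one of them is `v`, or `v` has limit length, and then
`v ∈ S` and `v` splits in `S` by the two limit clauses. So `v` is a splitting extension of `s`
in `⋂₀ D`; the other clauses pass to intersections directly, and for `D = ∅` the full tree
`2^{<κ}` is a lower bound.
-/

theorem node_ext {s t : BNode.{u}} (hlen : s.1 = t.1)
    (hval : ∀ γ (hs : γ < s.1) (ht : γ < t.1), s.2 ⟨γ, hs⟩ = t.2 ⟨γ, ht⟩) : s = t := by
  obtain ⟨α, f⟩ := s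
  obtain ⟨β, g⟩ := t
  obtain rfl : α = β := hlen
  exact congrArg (Sigma.mk α) (funext fun γ => hval γ.1 γ.2 γ.2)

def Compatible (s t : BNode.{u}) : Prop :=
  ∀ γ (hs : γ < s.1) (ht : γ < t.1), s.2 ⟨γ, hs⟩ = t.2 ⟨γ, ht⟩

def IsPrefix (s t : BNode.{u}) : Prop :=
  s.1 ≤ t.1 ∧ Compatible s t

namespace IsPrefix

theorem refl (s : BNode.{u}) : IsPrefix s s :=
  ⟨le_rfl, fun _ _ _ => rfl⟩

theorem trans {s t v : BNode.{u}} (hst : IsPrefix s t) (htv : IsPrefix t v) : IsPrefix s v :=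
  ⟨hst.1.trans htv.1, fun γ hs hv =>
    (hst.2 γ hs (hs.trans_le hst.1)).trans (htv.2 γ _ hv)⟩

theorem eq_of_le {s t : BNode.{u}} (h : IsPrefix s t) (hlen : t.1 ≤ s.1) : s = t :=
  node_ext (h.1.antisymm hlen) h.2

theorem compatible {s t v : BNode.{u}} (hsv : IsPrefix s v) (htv : IsPrefix t v) :
    Compatible s t := fun γ hs ht =>
  (hsv.2 γ hs (hs.trans_le hsv.1)).trans (htv.2 γ ht (ht.trans_le htv.1)).symm

theorem of_isPrefix_of_le {s t v : BNode.{u}} (hsv : IsPrefix s v) (htv : IsPrefix t v)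
    (hle : s.1 ≤ t.1) : IsPrefix s t :=
  ⟨hle, compatible hsv htv⟩

theorem nrestrict_eq {s t : BNode.{u}} (h : IsPrefix s t) : nrestrict t s.1 h.1 = s :=
  node_ext rfl fun γ _ hγ' => (h.2 γ hγ' (hγ'.trans_le h.1)).symm

theorem nrestrict {s t : BNode.{u}} (h : IsPrefix s t) {α : Ordinal.{u}} (hsα : s.1 ≤ α)
    (hα : α ≤ t.1) : IsPrefix s (nrestrict t α hα) :=
  ⟨hsα, fun γ hs _ => h.2 γ hs _⟩

end IsPrefix

theorem isPrefix_nrestrict (t : BNode.{u}) (α : Ordinal.{u}) (h : α ≤ t.1) :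
    IsPrefix (nrestrict t α h) t :=
  ⟨h, fun _ _ _ => rfl⟩

theorem extOne_nrestrict (t : BNode.{u}) (γ : Ordinal.{u}) (h : γ < t.1) :
    extOne (nrestrict t γ h.le) (t.2 ⟨γ, h⟩) =
      nrestrict t (γ + 1) (Order.add_one_le_iff.mpr h) := by
  refine node_ext rfl fun δ hδ _ => ?_
  change (if hδγ : δ < γ then t.2 ⟨δ, hδγ.trans h⟩ else t.2 ⟨γ, h⟩) = _
  split_ifs with hδγ
  · rfl
  · obtain rfl : δ = γ := (Order.lt_add_one_iff.mp hδ).antisymm (not_lt.mp hδγ)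
    rfl

def rootNode : BNode.{u} := ⟨0, fun _ => false⟩

theorem splits_of_extOne_mem {T : Set BNode.{u}} {s : BNode.{u}} {b₁ b₂ : Bool} (hb : b₁ ≠ b₂)
    (h₁ : extOne s b₁ ∈ T) (h₂ : extOne s b₂ ∈ T) : Splits T s := by
  cases b₁ <;> cases b₂ <;> simp_all [Splits]

theorem Splits.mono {T T' : Set BNode.{u}} {s : BNode.{u}} (hs : Splits T s) (hTT' : T ⊆ T') :
    Splits T' s :=
  ⟨hTT' hs.1, hTT' hs.2⟩

theorem splits_sInter_iff {D : Set (Set BNode.{u})} {s : BNode.{u}} :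
    Splits (⋂₀ D) s ↔ ∀ T ∈ D, Splits T s := by
  simp only [Splits, Set.mem_sInter, ← forall_and]

namespace IsSubtree

variable {κ : Cardinal.{u}} {T : Set BNode.{u}}

theorem mem_of_isPrefix (hT : IsSubtree κ T) {s t : BNode.{u}} (ht : t ∈ T)
    (hst : IsPrefix s t) : s ∈ T :=
  hst.nrestrict_eq ▸ hT.2.2 t ht s.1 hst.1

theorem rootNode_mem (hT : IsSubtree κ T) : rootNode ∈ T := by
  obtain ⟨s, hs⟩ := hT.1
  exact hT.mem_of_isPrefix hs ⟨zero_le, fun γ hγ _ => absurd hγ not_lt_zero⟩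

theorem mem_of_splits (hT : IsSubtree κ T) {s : BNode.{u}} (hs : Splits T s) : s ∈ T :=
  hT.mem_of_isPrefix hs.1 ⟨le_self_add, fun γ hγ _ => by simp only [extOne, dif_pos hγ]⟩

theorem compatible_or_splits (hT : IsSubtree κ T) {t₁ t₂ : BNode.{u}} (h₁ : t₁ ∈ T)
    (h₂ : t₂ ∈ T) :
    Compatible t₁ t₂ ∨ ∃ γ, ∃ (hγ₁ : γ < t₁.1) (hγ₂ : γ < t₂.1),
      t₁.2 ⟨γ, hγ₁⟩ ≠ t₂.2 ⟨γ, hγ₂⟩ ∧ Splits T (nrestrict t₁ γ hγ₁.le) := by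
  by_contra! hne
  obtain ⟨hnc, hsplit⟩ := hne
  simp only [Compatible, not_forall] at hnc
  obtain ⟨γ, ⟨hγ₁, hγ₂, hdiff⟩, hmin⟩ := WellFounded.has_min Ordinal.lt_wf
    {γ | ∃ (hγ₁ : γ < t₁.1) (hγ₂ : γ < t₂.1), t₁.2 ⟨γ, hγ₁⟩ ≠ t₂.2 ⟨γ, hγ₂⟩}
    hnc
  have hsame : nrestrict t₁ γ hγ₁.le = nrestrict t₂ γ hγ₂.le := by
    refine node_ext rfl fun δ hδ _ => ?_
    by_contra h
    exact hmin δ ⟨hδ.trans hγ₁, hδ.trans hγ₂, h⟩ hδ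
  refine hsplit γ hγ₁ hγ₂ hdiff (splits_of_extOne_mem hdiff ?_ ?_)
  · rw [extOne_nrestrict]
    exact hT.2.2 t₁ h₁ _ _
  · rw [hsame, extOne_nrestrict]
    exact hT.2.2 t₂ h₂ _ _

end IsSubtree

namespace IsSacks

variable {κ : Cardinal.{u}} {T : Set BNode.{u}}

theorem exists_least_splitting_extension (hT : IsSacks κ T) {s : BNode.{u}} (hs : s ∈ T) :
    ∃ t ∈ T, IsPrefix s t ∧ Splits T t ∧
      ∀ t' ∈ T, IsPrefix s t' → Splits T t' → IsPrefix t t' := by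
  have hne : {t | t ∈ T ∧ IsPrefix s t ∧ Splits T t}.Nonempty := by
    obtain ⟨t, ht, hle, hres, hsplit⟩ := hT.2.2.1 s hs
    exact ⟨t, ht, hres ▸ isPrefix_nrestrict t _ hle, hsplit⟩
  obtain ⟨t, ⟨ht, hst, hsplit⟩, hmin⟩ :=
    WellFounded.has_min (InvImage.wf Sigma.fst Ordinal.lt_wf) _ hne
  refine ⟨t, ht, hst, hsplit, fun t' ht' hst' hsplit' => ?_⟩
  rcases hT.1.compatible_or_splits ht ht' with hcomp | ⟨γ, hγ, hγ', hdiff, hγsplit⟩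
  · exact ⟨not_lt.mp fun hlt => hmin t' ⟨ht', hst', hsplit'⟩ hlt, hcomp⟩
  · have hsγ : s.1 ≤ γ := not_lt.mp fun hlt =>
      hdiff ((hst.2 γ hlt hγ).symm.trans (hst'.2 γ hlt hγ'))
    exact absurd hγ (hmin _ ⟨hT.1.2.2 t ht γ hγ.le, hst.nrestrict hsγ hγ.le, hγsplit⟩)

theorem splits_of_cofinal (hT : IsSacks κ T) {t : BNode.{u}} (ht : t.1 < κ.ord)
    {P : Set BNode.{u}} (hP : ∀ v ∈ P, IsPrefix v t ∧ Splits T v) (hne : P.Nonempty)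
    (hcof : ∀ β < t.1, ∃ v ∈ P, β < v.1) : Splits T t := by
  by_cases hmax : ∃ v ∈ P, t.1 ≤ v.1
  · obtain ⟨v, hv, hle⟩ := hmax
    exact (hP v hv).1.eq_of_le hle ▸ (hP v hv).2
  push Not at hmax
  obtain ⟨v₀, hv₀⟩ := hne
  have hlim : Order.IsSuccLimit t.1 :=
    ⟨not_isMin_of_lt (hmax v₀ hv₀), Order.isSuccPrelimit_of_succ_lt fun β hβ =>
      let ⟨v, hv, hβv⟩ := hcof β hβ
      (Order.succ_le_of_lt hβv).trans_lt (hmax v hv)⟩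
  have hmem : t ∈ T := hT.2.1 t ht hlim fun β hβ => by
    obtain ⟨v, hv, hβv⟩ := hcof β hβ
    exact hT.1.mem_of_isPrefix (hT.1.mem_of_splits (hP v hv).2)
      ((isPrefix_nrestrict t β hβ.le).of_isPrefix_of_le (hP v hv).1 hβv.le)
  refine hT.2.2.2 t hmem hlim fun β hβ => ?_
  obtain ⟨v, hv, hβv⟩ := hcof β hβ
  refine ⟨v.1, hβv.le, hmax v hv, ?_⟩
  rw [(hP v hv).1.nrestrict_eq]
  exact (hP v hv).2

end IsSacks

theorem exists_union_of_compatible {ι : Type*} (t : ι → BNode.{u})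
    (hcomp : ∀ i j, Compatible (t i) (t j)) (hbdd : BddAbove (Set.range fun i => (t i).1)) :
    ∃ v : BNode.{u}, v.1 = ⨆ i, (t i).1 ∧ ∀ i, IsPrefix (t i) v := by
  have hcov (δ : {δ // δ < ⨆ i, (t i).1}) : ∃ i, δ.1 < (t i).1 := (lt_ciSup_iff' hbdd).mp δ.2
  choose idx hidx using hcov
  exact ⟨⟨⨆ i, (t i).1, fun δ => (t (idx δ)).2 ⟨δ.1, hidx δ⟩⟩, rfl, fun i =>
    ⟨le_ciSup hbdd i, fun γ hγ hγ' => hcomp i (idx ⟨γ, hγ'⟩) γ hγ (hidx ⟨γ, hγ'⟩)⟩⟩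

theorem isSacks_setOf_lt_ord {κ : Cardinal.{u}} (hκ : Cardinal.aleph0 ≤ κ) :
    IsSacks κ {s : BNode.{u} | s.1 < κ.ord} := by
  have hlim : Order.IsSuccLimit κ.ord := Cardinal.isSuccLimit_ord hκ
  have hsucc (s : BNode.{u}) (hs : s.1 < κ.ord) (b : Bool) : (extOne s b).1 < κ.ord := by
    simpa only [extOne, ← Order.succ_eq_add_one] using hlim.succ_lt hs
  refine ⟨⟨⟨rootNode, hlim.bot_lt⟩, fun s hs => hs, fun s hs α hα => hα.trans_lt hs⟩,
    fun s hs _ _ => hs, fun s hs => ?_, fun s hs _ _ => ⟨hsucc s hs _, hsucc s hs _⟩⟩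
  exact ⟨s, hs, le_rfl, (IsPrefix.refl s).nrestrict_eq, hsucc s hs _, hsucc s hs _⟩

section Intersection

variable {κ : Cardinal.{u}} {D : Set (Set BNode.{u})}

theorem exists_splitting_extension_sInter (hκ : κ.IsRegular) (hD : ∀ T ∈ D, IsSacks κ T)
    (hdir : ∀ T₁ ∈ D, ∀ T₂ ∈ D, ∃ T ∈ D, T ⊆ T₁ ∧ T ⊆ T₂)
    (hcard : Cardinal.mk D < Cardinal.lift.{u + 1} κ) (hne : D.Nonempty)
    {s : BNode.{u}} (hs : s ∈ ⋂₀ D) :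
    ∃ v ∈ ⋂₀ D, IsPrefix s v ∧ Splits (⋂₀ D) v := by
  choose! t ht hst hsplit hleast using fun T hT =>
    (hD T hT).exists_least_splitting_extension (hs T hT)
  have hmono (T) (hT : T ∈ D) (R) (hR : R ∈ D) (hRT : R ⊆ T) : IsPrefix (t T) (t R) :=
    hleast T hT (t R) (hRT (ht R hR)) (hst R hR) ((hsplit R hR).mono hRT)
  have hcomp (T T' : D) : Compatible (t T) (t T') := by
    obtain ⟨R, hR, hRT, hRT'⟩ := hdir T T.2 T' T'.2
    exact (hmono T T.2 R hR hRT).compatible (hmono T' T'.2 R hR hRT')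
  have hlen_lt (T : D) : (t T).1 < κ.ord := (hD T T.2).1.2.1 _ (ht T T.2)
  have hbdd : BddAbove (Set.range fun T : D => (t T).1) :=
    ⟨κ.ord, Set.forall_mem_range.mpr fun T => (hlen_lt T).le⟩
  have hsup : ⨆ T : D, (t T).1 < κ.ord := by
    refine Ordinal.lift_iSup_lt_of_lt_cof ?_ hlen_lt
    rwa [← Ordinal.lift_cof, hκ.cof_ord, Cardinal.lift_id'.{u, u + 1}]
  obtain ⟨v, hlen, htv⟩ := exists_union_of_compatible (fun T : D => t T) hcomp hbdd
  have hvsplit (S) (hS : S ∈ D) : Splits S v := by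
    refine (hD S hS).splits_of_cofinal (hlen ▸ hsup) (P := t '' {R | R ∈ D ∧ R ⊆ S}) ?_ ?_ ?_
    · rintro _ ⟨R, ⟨hR, hRS⟩, rfl⟩
      exact ⟨htv ⟨R, hR⟩, (hsplit R hR).mono hRS⟩
    · obtain ⟨R, hR, hRS, -⟩ := hdir S hS S hS
      exact ⟨t R, R, ⟨hR, hRS⟩, rfl⟩
    · intro β hβ
      obtain ⟨T, hβT⟩ := (lt_ciSup_iff' hbdd).mp (hlen ▸ hβ)
      obtain ⟨R, hR, hRT, hRS⟩ := hdir T T.2 S hS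
      exact ⟨t R, ⟨R, ⟨hR, hRS⟩, rfl⟩, hβT.trans_le (hmono T T.2 R hR hRT).1⟩
  obtain ⟨T₀, hT₀⟩ := hne
  exact ⟨v, fun S hS => (hD S hS).1.mem_of_splits (hvsplit S hS),
    (hst T₀ hT₀).trans (htv ⟨T₀, hT₀⟩), splits_sInter_iff.mpr hvsplit⟩

theorem isSacks_sInter (hκ : κ.IsRegular) (hD : ∀ T ∈ D, IsSacks κ T)
    (hdir : ∀ T₁ ∈ D, ∀ T₂ ∈ D, ∃ T ∈ D, T ⊆ T₁ ∧ T ⊆ T₂)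
    (hcard : Cardinal.mk D < Cardinal.lift.{u + 1} κ) (hne : D.Nonempty) :
    IsSacks κ (⋂₀ D) := by
  obtain ⟨T₀, hT₀⟩ := hne
  refine ⟨⟨⟨rootNode, fun T hT => (hD T hT).1.rootNode_mem⟩,
      fun s hs => (hD T₀ hT₀).1.2.1 s (hs T₀ hT₀),
      fun s hs α hα T hT => (hD T hT).1.2.2 s (hs T hT) α hα⟩,
    fun s hs hlim hres T hT => (hD T hT).2.1 s hs hlim fun β hβ => hres β hβ T hT,
    fun s hs => ?_, fun s hs hlim hcof => ?_⟩
  · obtain ⟨v, hv, hsv, hsplit⟩ :=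
      exists_splitting_extension_sInter hκ hD hdir hcard ⟨T₀, hT₀⟩ hs
    exact ⟨v, hv, hsv.1, hsv.nrestrict_eq, hsplit⟩
  · refine splits_sInter_iff.mpr fun T hT => (hD T hT).2.2.2 s (hs T hT) hlim fun β hβ => ?_
    obtain ⟨γ, hβγ, hγ, hsplit⟩ := hcof β hβ
    exact ⟨γ, hβγ, hγ, splits_sInter_iff.mp hsplit T hT⟩

end Intersection

theorem sacks_directed_closed_general (κ : Cardinal.{u}) (hreg : κ.IsRegular)
    (D : Set (Set BNode.{u}))
    (hD : ∀ T ∈ D, IsSacks κ T)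
    (hdir : ∀ T₁ ∈ D, ∀ T₂ ∈ D, ∃ T ∈ D, T ⊆ T₁ ∧ T ⊆ T₂)
    (hcard : Cardinal.mk D < Cardinal.lift.{u + 1} κ) :
    (∃ T : Set BNode.{u}, IsSacks κ T ∧ ∀ S ∈ D, T ⊆ S) ∧
    (D.Nonempty → IsSacks κ (⋂₀ D)) := by
  rcases D.eq_empty_or_nonempty with rfl | hne
  · exact ⟨⟨_, isSacks_setOf_lt_ord hreg.aleph0_le, by simp⟩,
      fun h => absurd h Set.not_nonempty_empty⟩
  · have hsInter := isSacks_sInter hreg hD hdir hcard hne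
    exact ⟨⟨_, hsInter, fun S => Set.sInter_subset_of_mem⟩, fun _ => hsInter⟩

/-- For `κ` regular uncountable, `Sacks(κ)` is `<κ`-directed closed:
every directed `D ⊆ Sacks(κ)` with `|D| < κ` has a lower bound in `Sacks(κ)`; indeed,
if `D` is nonempty then `⋂D ∈ Sacks(κ)`. -/
theorem sacks_directed_closed (κ : Cardinal.{u}) (hreg : κ.IsRegular)
    (hunc : Cardinal.aleph0 < κ)
    (D : Set (Set BNode.{u}))
    (hD : ∀ T ∈ D, IsSacks κ T)
    (hdir : ∀ T₁ ∈ D, ∀ T₂ ∈ D, ∃ T ∈ D, T ⊆ T₁ ∧ T ⊆ T₂)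
    (hcard : Cardinal.mk D < Cardinal.lift.{u + 1} κ) :
    (∃ T : Set BNode.{u}, IsSacks κ T ∧ ∀ S ∈ D, T ⊆ S) ∧
    (D.Nonempty → IsSacks κ (⋂₀ D)) :=
  sacks_directed_closed_general κ hreg D hD hdir hcard

end Stmt8
end

section
/- Let μ < κ be regular cardinals with κ inaccessible, and let γ be an inaccessible cardinal with μ < γ < κ. Then {p ∈ E(μ,<κ) : dom(p) ⊆ μ × γ} is a regular suborder of the Easton collapse E(μ,<κ); indeed, for every p ∈ E(μ,<κ), the restriction p↾(μ × γ) belongs to this suborder and is a reduct of p into it. -/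
/-!
STATEMENT 11: For regular `μ < κ` with `κ` inaccessible and inaccessible `γ` with
`μ < γ < κ`, the conditions of the Easton collapse `E(μ,<κ)` with domain contained in
`μ × γ` form a regular suborder, witnessed by restriction being a reduction.
-/

universe u

namespace Stmt11

/-- Conditions: partial functions `μ × κ → κ`, coded as `Option`-valued functions on
pairs of ordinals. -/
abbrev PCond : Type (u + 1) := Ordinal.{u} × Ordinal.{u} → Option Ordinal.{u}

/-- `p` extends `q`: `p ⊇ q` as partial functions (so `p` is stronger, `p ≤ q`). -/
def Extends (p q : PCond.{u}) : Prop :=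
  ∀ x : Ordinal.{u} × Ordinal.{u}, ∀ v : Ordinal.{u}, q x = some v → p x = some v

/-- Compatibility within `S`: a common extension lying in `S`. -/
def CompatIn (S : Set PCond.{u}) (p q : PCond.{u}) : Prop :=
  ∃ r ∈ S, Extends r p ∧ Extends r q

/-- `A` is a maximal antichain of the suborder `S`. -/
def IsMaxAntichainIn (S A : Set PCond.{u}) : Prop :=
  (A ⊆ S ∧ ∀ p ∈ A, ∀ q ∈ A, p ≠ q → ¬ CompatIn S p q) ∧
  ∀ p ∈ S, ∃ a ∈ A, CompatIn S p a

/-- `P` is a regular suborder of `Q` (subsets of the conditions, ordered by reverse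
inclusion of partial functions): `P ⊆ Q`, incompatibility in `P` implies incompatibility
in `Q`, and maximal antichains of `P` are maximal antichains of `Q`. -/
def IsRegularSuborderOf (Q P : Set PCond.{u}) : Prop :=
  P ⊆ Q ∧ (∀ p ∈ P, ∀ q ∈ P, CompatIn Q p q → CompatIn P p q) ∧
  ∀ A : Set PCond.{u}, IsMaxAntichainIn P A → IsMaxAntichainIn Q A

/-- The support of a condition: the set of `η` mentioned in its domain. -/
def esupp (p : PCond.{u}) : Set Ordinal.{u} :=
  {η : Ordinal.{u} | ∃ a : Ordinal.{u}, (p (a, η)).isSome}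

/-- `p` is a condition of the Easton collapse `E(μ,<κ)`: a partial function
`p : μ × κ → κ` with `p(α,η) < η`, with first coordinates of its domain uniformly
bounded below `μ`, and with support Easton above `μ`
(`|supp(p) ∩ γ'| < γ'` for every regular `γ'` with `μ < γ' < κ`). -/
def InEaston (μ κ : Cardinal.{u}) (p : PCond.{u}) : Prop :=
  (∀ a η v : Ordinal.{u}, p (a, η) = some v → a < μ.ord ∧ η < κ.ord ∧ v < η) ∧
  (∃ ξ : Ordinal.{u}, ξ < μ.ord ∧ ∀ a η : Ordinal.{u}, (p (a, η)).isSome → a < ξ) ∧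
  (∀ γ' : Cardinal.{u}, γ'.IsRegular → μ < γ' → γ' < κ →
    Cardinal.mk ↥(esupp p ∩ Set.Iio γ'.ord) < Cardinal.lift.{u + 1} γ')

/-- Restriction of a condition to the pairs whose second coordinate is `< δ`. -/
noncomputable def restrictBelow (p : PCond.{u}) (δ : Ordinal.{u}) : PCond.{u} :=
  fun x => if x.2 < δ then p x else none


lemma restrict_some {p : PCond.{u}} {δ : Ordinal.{u}} {x : Ordinal.{u} × Ordinal.{u}}
    {v : Ordinal.{u}} (h : restrictBelow p δ x = some v) : x.2 < δ ∧ p x = some v := by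
  unfold restrictBelow at h
  by_cases hx : x.2 < δ
  · exact ⟨hx, by simpa [hx] using h⟩
  · simp [hx] at h

lemma restrict_isSome {p : PCond.{u}} {δ : Ordinal.{u}} {x : Ordinal.{u} × Ordinal.{u}}
    (h : ((restrictBelow p δ) x).isSome) : x.2 < δ ∧ (p x).isSome := by
  obtain ⟨v, hv⟩ := Option.isSome_iff_exists.1 h
  obtain ⟨h1, h2⟩ := restrict_some hv
  exact ⟨h1, Option.isSome_iff_exists.2 ⟨v, h2⟩⟩

lemma esupp_restrict_subset (p : PCond.{u}) (δ : Ordinal.{u}) :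
    esupp (restrictBelow p δ) ⊆ esupp p := by
  rintro η ⟨a, ha⟩
  exact ⟨a, (restrict_isSome ha).2⟩

lemma inEaston_restrict {μ κ : Cardinal.{u}} {p : PCond.{u}} (hp : InEaston μ κ p)
    (δ : Ordinal.{u}) : InEaston μ κ (restrictBelow p δ) := by
  obtain ⟨h1, ⟨ξ, hξ, h2⟩, h3⟩ := hp
  refine ⟨?_, ⟨ξ, hξ, ?_⟩, ?_⟩
  · intro a η v h; exact h1 a η v (restrict_some h).2
  · intro a η h; exact h2 a η (restrict_isSome h).2
  · intro γ' hreg hμγ' hγ'κ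
    refine lt_of_le_of_lt ?_ (h3 γ' hreg hμγ' hγ'κ)
    exact Cardinal.mk_le_mk_of_subset
      (Set.inter_subset_inter_left _ (esupp_restrict_subset p δ))

/-- If `r` extends `q` and `q` has support below `δ`, then `r↾δ` extends `q`. -/
lemma restrict_extends {r q : PCond.{u}} {δ : Ordinal.{u}} (hrq : Extends r q)
    (hb : ∀ a η : Ordinal.{u}, (q (a, η)).isSome → η < δ) :
    Extends (restrictBelow r δ) q := by
  intro x v hv
  have hx : x.2 < δ := hb x.1 x.2 (by rw [show (x.1, x.2) = x from rfl, hv]; rfl)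
  have := hrq x v hv
  simpa [restrictBelow, hx] using this

/-- Amalgamation of `p'` (below `δ`) and `p` (at or above `δ`). -/
noncomputable def merge (p' p : PCond.{u}) (δ : Ordinal.{u}) : PCond.{u} :=
  fun x => if x.2 < δ then p' x else p x

lemma merge_some {p' p : PCond.{u}} {δ : Ordinal.{u}} {x : Ordinal.{u} × Ordinal.{u}}
    {v : Ordinal.{u}} (h : merge p' p δ x = some v) : p' x = some v ∨ p x = some v := by
  unfold merge at h
  by_cases hx : x.2 < δ
  · exact Or.inl (by simpa [hx] using h)
  · exact Or.inr (by simpa [hx] using h)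

lemma esupp_merge_subset (p' p : PCond.{u}) (δ : Ordinal.{u}) :
    esupp (merge p' p δ) ⊆ esupp p' ∪ esupp p := by
  rintro η ⟨a, ha⟩
  obtain ⟨v, hv⟩ := Option.isSome_iff_exists.1 ha
  rcases merge_some hv with h | h
  · exact Or.inl ⟨a, Option.isSome_iff_exists.2 ⟨v, h⟩⟩
  · exact Or.inr ⟨a, Option.isSome_iff_exists.2 ⟨v, h⟩⟩

lemma inEaston_merge {μ κ : Cardinal.{u}} {p' p : PCond.{u}} {δ : Ordinal.{u}}
    (hp' : InEaston μ κ p') (hp : InEaston μ κ p) : InEaston μ κ (merge p' p δ) := by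
  obtain ⟨h1', ⟨ξ', hξ', h2'⟩, h3'⟩ := hp'
  obtain ⟨h1, ⟨ξ, hξ, h2⟩, h3⟩ := hp
  refine ⟨?_, ⟨max ξ' ξ, max_lt hξ' hξ, ?_⟩, ?_⟩
  · intro a η v h
    rcases merge_some h with h | h
    · exact h1' a η v h
    · exact h1 a η v h
  · intro a η h
    obtain ⟨v, hv⟩ := Option.isSome_iff_exists.1 h
    rcases merge_some hv with h | h
    · exact lt_of_lt_of_le (h2' a η (Option.isSome_iff_exists.2 ⟨v, h⟩)) (le_max_left _ _)
    · exact lt_of_lt_of_le (h2 a η (Option.isSome_iff_exists.2 ⟨v, h⟩)) (le_max_right _ _)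
  · intro γ' hreg hμγ' hγ'κ
    have hsub : esupp (merge p' p δ) ∩ Set.Iio γ'.ord ⊆
        (esupp p' ∩ Set.Iio γ'.ord) ∪ (esupp p ∩ Set.Iio γ'.ord) := by
      rw [← Set.union_inter_distrib_right]
      exact Set.inter_subset_inter_left _ (esupp_merge_subset p' p δ)
    refine lt_of_le_of_lt (Cardinal.mk_le_mk_of_subset hsub) ?_
    refine lt_of_le_of_lt (Cardinal.mk_union_le _ _) ?_
    exact Cardinal.add_lt_of_lt (Cardinal.aleph0_le_lift.2 hreg.aleph0_le)
      (h3' γ' hreg hμγ' hγ'κ) (h3 γ' hreg hμγ' hγ'κ)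

lemma merge_extends_left {p' p : PCond.{u}} {δ : Ordinal.{u}}
    (hb : ∀ a η : Ordinal.{u}, (p' (a, η)).isSome → η < δ) :
    Extends (merge p' p δ) p' := by
  intro x v h
  have hx : x.2 < δ := hb x.1 x.2 (by rw [show (x.1, x.2) = x from rfl, h]; rfl)
  simpa [merge, hx] using h

lemma merge_extends_right {p' p : PCond.{u}} {δ : Ordinal.{u}}
    (hext : Extends p' (restrictBelow p δ)) : Extends (merge p' p δ) p := by
  intro x v h
  by_cases hx : x.2 < δ
  · have h0 : restrictBelow p δ x = some v := by simpa [restrictBelow, hx] using h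
    have := hext x v h0
    simpa [merge, hx] using this
  · simpa [merge, hx] using h

/-- Let `μ < κ` be regular with `κ` inaccessible, and let `γ` be
inaccessible with `μ < γ < κ`.  Then `{p ∈ E(μ,<κ) : dom(p) ⊆ μ × γ}` is a regular
suborder of `E(μ,<κ)`; indeed, for every `p ∈ E(μ,<κ)` the restriction `p↾(μ × γ)`
belongs to this suborder and is a reduct of `p` into it. -/
theorem easton_restriction_regular (μ κ γ : Cardinal.{u})
    (hμ : μ.IsRegular) (hκ : κ.IsInaccessible) (hμκ : μ < κ)
    (hγ : γ.IsInaccessible) (hμγ : μ < γ) (hγκ : γ < κ) :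
    (∀ p : PCond.{u}, InEaston μ κ p →
      (InEaston μ κ (restrictBelow p γ.ord) ∧
        (∀ a η : Ordinal.{u}, ((restrictBelow p γ.ord) (a, η)).isSome → η < γ.ord)) ∧
      (∀ p' : PCond.{u}, InEaston μ κ p' →
        (∀ a η : Ordinal.{u}, (p' (a, η)).isSome → η < γ.ord) →
        Extends p' (restrictBelow p γ.ord) →
        CompatIn {q : PCond.{u} | InEaston μ κ q} p' p)) ∧
    IsRegularSuborderOf {p : PCond.{u} | InEaston μ κ p}
      {p : PCond.{u} | InEaston μ κ p ∧
        ∀ a η : Ordinal.{u}, (p (a, η)).isSome → η < γ.ord} := by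
  -- the reduct property, used twice
  have reduct : ∀ p : PCond.{u}, InEaston μ κ p →
      ∀ p' : PCond.{u}, InEaston μ κ p' →
        (∀ a η : Ordinal.{u}, (p' (a, η)).isSome → η < γ.ord) →
        Extends p' (restrictBelow p γ.ord) →
        CompatIn {q : PCond.{u} | InEaston μ κ q} p' p := by
    intro p hp p' hp' hb hext
    exact ⟨merge p' p γ.ord, inEaston_merge hp' hp,
      merge_extends_left hb, merge_extends_right hext⟩
  -- compatibility preservation
  have compat : ∀ p ∈ {p : PCond.{u} | InEaston μ κ p ∧
        ∀ a η : Ordinal.{u}, (p (a, η)).isSome → η < γ.ord},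
      ∀ q ∈ {p : PCond.{u} | InEaston μ κ p ∧
        ∀ a η : Ordinal.{u}, (p (a, η)).isSome → η < γ.ord},
      CompatIn {p : PCond.{u} | InEaston μ κ p} p q →
      CompatIn {p : PCond.{u} | InEaston μ κ p ∧
        ∀ a η : Ordinal.{u}, (p (a, η)).isSome → η < γ.ord} p q := by
    rintro p hp q hq ⟨r, hr, hrp, hrq⟩
    exact ⟨restrictBelow r γ.ord,
      ⟨inEaston_restrict hr _, fun a η h => (restrict_isSome h).1⟩,
      restrict_extends hrp hp.2, restrict_extends hrq hq.2⟩
  refine ⟨fun p hp => ⟨⟨inEaston_restrict hp _, fun a η h => (restrict_isSome h).1⟩,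
      reduct p hp⟩, fun p hp => hp.1, compat, ?_⟩
  rintro A ⟨⟨hAP, hanti⟩, hmax⟩
  refine ⟨⟨fun a ha => (hAP ha).1, ?_⟩, ?_⟩
  · intro p hpA q hqA hne hcompQ
    exact hanti p hpA q hqA hne (compat p (hAP hpA) q (hAP hqA) hcompQ)
  · intro p hp
    obtain ⟨a, haA, p'', hp''P, hp''p0, hp''a⟩ :=
      hmax (restrictBelow p γ.ord)
        ⟨inEaston_restrict hp _, fun a η h => (restrict_isSome h).1⟩
    obtain ⟨r, hrQ, hrp'', hrp⟩ := reduct p hp p'' hp''P.1 hp''P.2 hp''p0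
    exact ⟨a, haA, r, hrQ, hrp, fun x v hv => hrp'' x v (hp''a x v hv)⟩


end Stmt11
end

section
/- Let μ < κ be regular cardinals and let γ be a regular cardinal with μ < γ < κ. Then {p ∈ S(μ,<κ) : dom(p) ⊆ μ × γ} is a regular suborder of the Silver collapse S(μ,<κ); indeed, for every p ∈ S(μ,<κ), the restriction p↾(μ × γ) belongs to this suborder and is a reduct of p into it. -/
/-!
STATEMENT 12: For regular `μ < κ` and regular `γ` with `μ < γ < κ`, the conditions of
the Silver collapse `S(μ,<κ)` with domain contained in `μ × γ` form a regular suborder,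
witnessed by restriction being a reduction.
-/

universe u

namespace Stmt12

/-- Conditions: partial functions `μ × κ → κ`, coded as `Option`-valued functions on
pairs of ordinals. -/
abbrev PCond : Type (u + 1) := Ordinal.{u} × Ordinal.{u} → Option Ordinal.{u}

/-- `p` extends `q`: `p ⊇ q` as partial functions (so `p` is stronger, `p ≤ q`). -/
def Extends (p q : PCond.{u}) : Prop :=
  ∀ x : Ordinal.{u} × Ordinal.{u}, ∀ v : Ordinal.{u}, q x = some v → p x = some v

/-- Compatibility within `S`: a common extension lying in `S`. -/
def CompatIn (S : Set PCond.{u}) (p q : PCond.{u}) : Prop :=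
  ∃ r ∈ S, Extends r p ∧ Extends r q

/-- `A` is a maximal antichain of the suborder `S`. -/
def IsMaxAntichainIn (S A : Set PCond.{u}) : Prop :=
  (A ⊆ S ∧ ∀ p ∈ A, ∀ q ∈ A, p ≠ q → ¬ CompatIn S p q) ∧
  ∀ p ∈ S, ∃ a ∈ A, CompatIn S p a

/-- `P` is a regular suborder of `Q` (subsets of the conditions, ordered by reverse
inclusion of partial functions). -/
def IsRegularSuborderOf (Q P : Set PCond.{u}) : Prop :=
  P ⊆ Q ∧ (∀ p ∈ P, ∀ q ∈ P, CompatIn Q p q → CompatIn P p q) ∧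
  ∀ A : Set PCond.{u}, IsMaxAntichainIn P A → IsMaxAntichainIn Q A

/-- `p` is a condition of the Silver collapse `S(μ,<κ)`: a partial function
`p : μ × κ → κ` of cardinality `≤ μ` with `p(α,η) < η` and with first coordinates of
its domain uniformly bounded below `μ`. -/
def InSilver (μ κ : Cardinal.{u}) (p : PCond.{u}) : Prop :=
  (∀ a η v : Ordinal.{u}, p (a, η) = some v → a < μ.ord ∧ η < κ.ord ∧ v < η) ∧
  (∃ ξ : Ordinal.{u}, ξ < μ.ord ∧ ∀ a η : Ordinal.{u}, (p (a, η)).isSome → a < ξ) ∧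
  Cardinal.mk ↥{x : Ordinal.{u} × Ordinal.{u} | (p x).isSome} ≤ Cardinal.lift.{u + 1} μ

/-- Restriction of a condition to the pairs whose second coordinate is `< δ`. -/
noncomputable def restrictBelow (p : PCond.{u}) (δ : Ordinal.{u}) : PCond.{u} :=
  fun x => if x.2 < δ then p x else none


lemma extends_trans {p q r : PCond.{u}} (h1 : Extends p q) (h2 : Extends q r) :
    Extends p r := fun x v hv => h1 x v (h2 x v hv)

lemma restrict_inSilver {μ κ : Cardinal.{u}} (δ : Ordinal.{u}) {p : PCond.{u}}
    (hp : InSilver μ κ p) : InSilver μ κ (restrictBelow p δ) := by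
  obtain ⟨h1, ⟨ξ, hξ, hξ'⟩, h3⟩ := hp
  refine ⟨?_, ⟨ξ, hξ, ?_⟩, ?_⟩
  · intro a η v hv
    by_cases h : η < δ
    · exact h1 a η v (by simpa [restrictBelow, h] using hv)
    · simp [restrictBelow, h] at hv
  · intro a η h
    by_cases hh : η < δ
    · exact hξ' a η (by simpa [restrictBelow, hh] using h)
    · simp [restrictBelow, hh] at h
  · refine le_trans (Cardinal.mk_le_mk_of_subset ?_) h3
    intro x hx
    simp only [Set.mem_setOf_eq, restrictBelow] at hx ⊢
    by_cases h : x.2 < δ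
    · simpa [h] using hx
    · simp [h] at hx

lemma merge_inSilver {μ κ : Cardinal.{u}} (hμinf : Cardinal.aleph0 ≤ μ) (δ : Ordinal.{u})
    {p q : PCond.{u}} (hp : InSilver μ κ p) (hq : InSilver μ κ q) :
    InSilver μ κ (fun x => if x.2 < δ then p x else q x) := by
  obtain ⟨h1, ⟨ξ, hξ, hξ'⟩, h3⟩ := hp
  obtain ⟨g1, ⟨ζ, hζ, hζ'⟩, g3⟩ := hq
  refine ⟨?_, ⟨max ξ ζ, max_lt hξ hζ, ?_⟩, ?_⟩
  · intro a η v hv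
    by_cases h : η < δ
    · exact h1 a η v (by simpa [h] using hv)
    · exact g1 a η v (by simpa [h] using hv)
  · intro a η h
    by_cases hh : η < δ
    · exact lt_of_lt_of_le (hξ' a η (by simpa [hh] using h)) (le_max_left _ _)
    · exact lt_of_lt_of_le (hζ' a η (by simpa [hh] using h)) (le_max_right _ _)
  · have hsub : {x : Ordinal.{u} × Ordinal.{u} | ((if x.2 < δ then p x else q x) : Option Ordinal.{u}).isSome}
        ⊆ {x | (p x).isSome} ∪ {x | (q x).isSome} := by
      intro x hx
      simp only [Set.mem_setOf_eq] at hx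
      by_cases h : x.2 < δ
      · exact Or.inl (by simpa [h] using hx)
      · exact Or.inr (by simpa [h] using hx)
    calc Cardinal.mk ↥{x : Ordinal.{u} × Ordinal.{u} | ((if x.2 < δ then p x else q x) : Option Ordinal.{u}).isSome}
        ≤ Cardinal.mk ↥({x : Ordinal.{u} × Ordinal.{u} | (p x).isSome} ∪ {x | (q x).isSome}) :=
          Cardinal.mk_le_mk_of_subset hsub
      _ ≤ Cardinal.mk ↥{x : Ordinal.{u} × Ordinal.{u} | (p x).isSome}
            + Cardinal.mk ↥{x : Ordinal.{u} × Ordinal.{u} | (q x).isSome} := Cardinal.mk_union_le _ _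
      _ ≤ Cardinal.lift.{u + 1} μ + Cardinal.lift.{u + 1} μ := add_le_add h3 g3
      _ = Cardinal.lift.{u + 1} μ :=
          Cardinal.add_eq_self (Cardinal.aleph0_le_lift.mpr hμinf)

lemma reduct_lemma {μ κ : Cardinal.{u}} (hμinf : Cardinal.aleph0 ≤ μ) (δ : Ordinal.{u})
    {p p' : PCond.{u}} (hp : InSilver μ κ p) (hp' : InSilver μ κ p')
    (hdom : ∀ a η : Ordinal.{u}, (p' (a, η)).isSome → η < δ)
    (hext : Extends p' (restrictBelow p δ)) :
    CompatIn {q : PCond.{u} | InSilver μ κ q} p' p := by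
  refine ⟨fun x => if x.2 < δ then p' x else p x, merge_inSilver hμinf δ hp' hp, ?_, ?_⟩
  · intro x v hv
    have hx : x.2 < δ := hdom x.1 x.2 (by rw [Prod.mk.eta, hv]; rfl)
    simpa [hx] using hv
  · intro x v hv
    by_cases h : x.2 < δ
    · have : restrictBelow p δ x = some v := by simp [restrictBelow, h, hv]
      simpa [h] using hext x v this
    · simpa [h] using hv

/-- Let `μ < κ` be regular cardinals and let `γ` be regular with
`μ < γ < κ`.  Then `{p ∈ S(μ,<κ) : dom(p) ⊆ μ × γ}` is a regular suborder of the Silver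
collapse `S(μ,<κ)`; indeed, for every `p ∈ S(μ,<κ)` the restriction `p↾(μ × γ)` belongs
to this suborder and is a reduct of `p` into it. -/
theorem silver_restriction_regular (μ κ γ : Cardinal.{u})
    (hμ : μ.IsRegular) (hκ : κ.IsRegular) (hμκ : μ < κ)
    (hγ : γ.IsRegular) (hμγ : μ < γ) (hγκ : γ < κ) :
    (∀ p : PCond.{u}, InSilver μ κ p →
      (InSilver μ κ (restrictBelow p γ.ord) ∧
        (∀ a η : Ordinal.{u}, ((restrictBelow p γ.ord) (a, η)).isSome → η < γ.ord)) ∧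
      (∀ p' : PCond.{u}, InSilver μ κ p' →
        (∀ a η : Ordinal.{u}, (p' (a, η)).isSome → η < γ.ord) →
        Extends p' (restrictBelow p γ.ord) →
        CompatIn {q : PCond.{u} | InSilver μ κ q} p' p)) ∧
    IsRegularSuborderOf {p : PCond.{u} | InSilver μ κ p}
      {p : PCond.{u} | InSilver μ κ p ∧
        ∀ a η : Ordinal.{u}, (p (a, η)).isSome → η < γ.ord} := by
  have hμinf : Cardinal.aleph0 ≤ μ := hμ.aleph0_le
  have compatPQ : ∀ p ∈ {p : PCond.{u} | InSilver μ κ p ∧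
        ∀ a η : Ordinal.{u}, (p (a, η)).isSome → η < γ.ord},
      ∀ q ∈ {p : PCond.{u} | InSilver μ κ p ∧
        ∀ a η : Ordinal.{u}, (p (a, η)).isSome → η < γ.ord},
      CompatIn {p : PCond.{u} | InSilver μ κ p} p q →
      CompatIn {p : PCond.{u} | InSilver μ κ p ∧
        ∀ a η : Ordinal.{u}, (p (a, η)).isSome → η < γ.ord} p q := by
    rintro p hp q hq ⟨r, hr, hrp, hrq⟩
    refine ⟨restrictBelow r γ.ord, ⟨restrict_inSilver _ hr, ?_⟩, ?_, ?_⟩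
    · intro a η h
      by_cases hh : η < γ.ord
      · exact hh
      · simp [restrictBelow, hh] at h
    · intro x v hv
      have hx : x.2 < γ.ord := hp.2 x.1 x.2 (by rw [Prod.mk.eta, hv]; rfl)
      simpa [restrictBelow, hx] using hrp x v hv
    · intro x v hv
      have hx : x.2 < γ.ord := hq.2 x.1 x.2 (by rw [Prod.mk.eta, hv]; rfl)
      simpa [restrictBelow, hx] using hrq x v hv
  constructor
  · intro p hp
    constructor
    · refine ⟨restrict_inSilver _ hp, ?_⟩
      intro a η h
      by_cases hh : η < γ.ord
      · exact hh
      · simp [restrictBelow, hh] at h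
    · intro p' hp' hdom hext
      exact reduct_lemma hμinf γ.ord hp hp' hdom hext
  · refine ⟨fun p hp => hp.1, compatPQ, ?_⟩
    rintro A ⟨⟨hAP, hanti⟩, hmax⟩
    constructor
    · refine ⟨fun a ha => (hAP ha).1, ?_⟩
      intro p hp q hq hne hc
      exact hanti p hp q hq hne (compatPQ p (hAP hp) q (hAP hq) hc)
    · intro p hp
      have hbdd : ∀ a η : Ordinal.{u}, ((restrictBelow p γ.ord) (a, η)).isSome → η < γ.ord := by
        intro a η h
        by_cases hh : η < γ.ord
        · exact hh
        · simp [restrictBelow, hh] at h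
      obtain ⟨a, ha, r, hrP, hrp0, hra⟩ := hmax (restrictBelow p γ.ord)
        ⟨restrict_inSilver _ hp, hbdd⟩
      obtain ⟨s, hs, hsr, hsp⟩ := reduct_lemma hμinf γ.ord hp hrP.1 hrP.2 hrp0
      exact ⟨a, ha, s, hs, hsp, extends_trans hsr hra⟩


end Stmt12
end
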